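/- arXiv:1310.3235 — 3 statements merged into one kernel-verified Lean document; each statement's English description precedes it below -/
import Mathlib

section
/- Let n ≥ 1 and 0 ≤ k ≤ n − 1 be natural numbers, set N = 2n − k − 1, and let g, h : Fin n → (Fin n → ZMod 2) satisfy ∑_{l} (h i l) · (g j l) = 1 if i = j and 0 otherwise, for all i, j. Let pad : (Fin n → ZMod 2) → (Fin N → ZMod 2) extend a vector by zeros, and for n ≤ r < N let e_r : Fin N → ZMod 2 be the standard basis vector with a 1 in coordinate r. Define, with 0-based indices, the vectors in (Fin N → ZMod 2) × (Fin N → ZMod 2): A_i = (pad(g i), 0) for 0 ≤ i < k; B_j = (pad(g (k+j)) + e_{n+j}, 0) and C_j = (0, pad(h (k+j)) + e_{n+j}) for 0 ≤ j < n − k − 1. Then the family consisting of all 2n − k − 2 vectors A_i, B_j, C_j is linearly independent over ZMod 2. -/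
/-- Pad a vector in `Fin n → ZMod 2` with zeros to a vector in `Fin N → ZMod 2`. -/
def padV (n N : ℕ) (v : Fin n → ZMod 2) : Fin N → ZMod 2 :=
  fun r => if h : (r : ℕ) < n then v ⟨r, h⟩ else 0

/-- Standard basis vector of `Fin N → ZMod 2` with a `1` in coordinate `r`. -/
def eV (N : ℕ) (r : ℕ) : Fin N → ZMod 2 := fun l => if (l : ℕ) = r then 1 else 0

/-- Symplectic product of two Pauli operators in binary representation. -/
def sympl (N : ℕ) (u v : (Fin N → ZMod 2) × (Fin N → ZMod 2)) : ZMod 2 :=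
  (∑ l, u.1 l * v.2 l) + (∑ l, u.2 l * v.1 l)

/-- The symplectic representatives of the stabilizer generators
`S_i = Z^{g_i}` (for `i < k`), `S_{k+j} = Z^{g_{k+j}} ⊗ Z_{n+j}` and
`S_{n-1+j} = X^{h_{k+j}} ⊗ X_{n+j}` (for `j < n - k - 1`) of the
`[[2n-k-1, 1]]` code built from a classical code with generator rows `g`. -/
def gens (n k : ℕ) (hn : 1 ≤ n) (hk : k ≤ n - 1) (g h : Fin n → Fin n → ZMod 2) :
    Fin k ⊕ Fin (n - k - 1) ⊕ Fin (n - k - 1) →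
      (Fin (2 * n - k - 1) → ZMod 2) × (Fin (2 * n - k - 1) → ZMod 2)
  | Sum.inl i => (padV n (2 * n - k - 1) (g ⟨i.1, by have := i.2; omega⟩), 0)
  | Sum.inr (Sum.inl j) =>
      (padV n (2 * n - k - 1) (g ⟨k + j.1, by have := j.2; omega⟩)
        + eV (2 * n - k - 1) (n + j.1), 0)
  | Sum.inr (Sum.inr j) =>
      (0, padV n (2 * n - k - 1) (h ⟨k + j.1, by have := j.2; omega⟩)
        + eV (2 * n - k - 1) (n + j.1))

/-!
Every generator has a destabilizer, a Pauli vector whose symplectic product with it is `1` and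
with every other generator is `0`: `X^{h_i}` for `A_i` (this is where the duality of `g` and `h`
enters; `h_i` pairs to `0` with `g_{k+j}` because `i < k`), `X_{n+j}` for `B_j` and `Z_{n+j}`
for `C_j`. The symplectic product with a fixed vector is a linear form, so this biorthogonal
family of linear forms forces the generators to be linearly independent.
-/

open Matrix

lemma padV_apply_of_le {n N : ℕ} (v : Fin n → ZMod 2) {r : Fin N} (hr : n ≤ r) :
    padV n N v r = 0 :=
  dif_neg (Nat.not_lt.mpr hr)

lemma padV_dotProduct_padV {n N : ℕ} (hN : n ≤ N) (u v : Fin n → ZMod 2) :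
    padV n N u ⬝ᵥ padV n N v = u ⬝ᵥ v := by
  refine (Fintype.sum_of_injective (Fin.castLE hN) (Fin.castLE_injective hN) _ _
    (fun r hr => ?_) (fun l => ?_)).symm
  · have : n ≤ (r : ℕ) := Nat.not_lt.mp fun h => hr ⟨⟨r, h⟩, rfl⟩
    simp [padV_apply_of_le _ this]
  · simp [padV]

lemma eV_eq_single {N r : ℕ} (hr : r < N) : eV N r = Pi.single ⟨r, hr⟩ 1 := by
  ext l
  simp [eV, Pi.single_apply, Fin.ext_iff]

lemma padV_dotProduct_eV {n N r : ℕ} (v : Fin n → ZMod 2) (hn : n ≤ r) (hr : r < N) :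
    padV n N v ⬝ᵥ eV N r = 0 := by
  rw [eV_eq_single hr, dotProduct_single_one]
  exact padV_apply_of_le v hn

lemma eV_dotProduct_padV {n N r : ℕ} (v : Fin n → ZMod 2) (hn : n ≤ r) (hr : r < N) :
    eV N r ⬝ᵥ padV n N v = 0 := by
  rw [dotProduct_comm, padV_dotProduct_eV v hn hr]

lemma eV_dotProduct_eV {N r s : ℕ} (hr : r < N) (hs : s < N) :
    eV N r ⬝ᵥ eV N s = if r = s then 1 else 0 := by
  simp [eV_eq_single hr, eV_eq_single hs, Pi.single_apply, Fin.ext_iff, eq_comm]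

lemma sympl_eq (N : ℕ) (u v : (Fin N → ZMod 2) × (Fin N → ZMod 2)) :
    sympl N u v = u.1 ⬝ᵥ v.2 + u.2 ⬝ᵥ v.1 :=
  rfl

def symplDual (N : ℕ) (w : (Fin N → ZMod 2) × (Fin N → ZMod 2)) :
    Module.Dual (ZMod 2) ((Fin N → ZMod 2) × (Fin N → ZMod 2)) where
  toFun u := sympl N w u
  map_add' u v := by simp only [sympl_eq, Prod.fst_add, Prod.snd_add, dotProduct_add]; ring
  map_smul' c u := by simp [sympl_eq, mul_add]

def destabilizers (n k : ℕ) (hk : k ≤ n - 1) (h : Fin n → Fin n → ZMod 2) :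
    Fin k ⊕ Fin (n - k - 1) ⊕ Fin (n - k - 1) →
      (Fin (2 * n - k - 1) → ZMod 2) × (Fin (2 * n - k - 1) → ZMod 2)
  | Sum.inl i => (0, padV n (2 * n - k - 1) (h ⟨i.1, by have := i.2; omega⟩))
  | Sum.inr (Sum.inl j) => (0, eV (2 * n - k - 1) (n + j.1))
  | Sum.inr (Sum.inr j) => (eV (2 * n - k - 1) (n + j.1), 0)

lemma sympl_gens_destabilizers (n k : ℕ) (hn : 1 ≤ n) (hk : k ≤ n - 1)
    (g h : Fin n → Fin n → ZMod 2) (hdual : ∀ i j, h i ⬝ᵥ g j = if i = j then 1 else 0)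
    (s t : Fin k ⊕ Fin (n - k - 1) ⊕ Fin (n - k - 1)) :
    sympl _ (destabilizers n k hk h t) (gens n k hn hk g h s) = if t = s then 1 else 0 := by
  have hN : n ≤ 2 * n - k - 1 := by omega
  rcases s with i | j | j <;> rcases t with i' | j' | j' <;>
    simp (disch := omega) [sympl_eq, gens, destabilizers, padV_dotProduct_padV hN, hdual,
      padV_dotProduct_eV, eV_dotProduct_padV, eV_dotProduct_eV, Fin.ext_iff]
  all_goals omega

/-- The `2n - k - 2` stabilizer generators of the `[[2n-k-1, 1]]` code
constructed from dual bases `g`, `h` of `𝔽₂ⁿ` are linearly independent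
over `ZMod 2`. -/
theorem gens_linearIndependent (n k : ℕ) (hn : 1 ≤ n) (hk : k ≤ n - 1)
    (g h : Fin n → Fin n → ZMod 2)
    (hdual : ∀ i j, (∑ l, h i l * g j l) = if i = j then 1 else 0) :
    LinearIndependent (ZMod 2) (gens n k hn hk g h) := by
  have pairing := sympl_gens_destabilizers n k hn hk g h hdual
  refine .of_pairwise_dual_eq_zero_one _ (fun t => symplDual _ (destabilizers n k hk h t))
    (fun t s hts => ?_) (fun s => ?_)
  · simpa [symplDual, pairing] using hts
  · simp [symplDual, pairing]
end

section
/- Let n ≥ 1 and 0 ≤ k ≤ n − 1 be natural numbers, set N = 2n − k − 1, and let g, h : Fin n → (Fin n → ZMod 2) satisfy ∑_{l} (h i l) · (g j l) = 1 if i = j and 0 otherwise, for all i, j. Let pad : (Fin n → ZMod 2) → (Fin N → ZMod 2) extend a vector by zeros, and for n ≤ r < N let e_r : Fin N → ZMod 2 be the standard basis vector with a 1 in coordinate r. Define, with 0-based indices, the vectors in (Fin N → ZMod 2) × (Fin N → ZMod 2): A_i = (pad(g i), 0) for 0 ≤ i < k; B_j = (pad(g (k+j)) + e_{n+j}, 0)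 and C_j = (0, pad(h (k+j)) + e_{n+j}) for 0 ≤ j < n − k − 1; and the logical vectors z̄ = (pad(g (n−1)), 0) and x̄ = (0, pad(h (n−1))). Then ω(z̄, v) = 0 and ω(x̄, v) = 0 for every v among the A_i, B_j, C_j, and ω(z̄, x̄) = 1, where ω((z,x),(z',x')) = ∑_l z_l·x'_l + ∑_l x_l·z'_l ∈ ZMod 2. -/
/-! Zero-padding preserves dot products and is orthogonal to `eV N r` for `r ≥ n`, so each
symplectic product below is a dot product `h i ⬝ g j` in `𝔽₂ⁿ`, which duality evaluates; the
logical index `n - 1` differs from every generator index `i < k` and `k + j < n - 1`. -/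

lemma sum_padV_mul_padV {n N : ℕ} (hN : n ≤ N) (u v : Fin n → ZMod 2) :
    ∑ l : Fin N, padV n N u l * padV n N v l = ∑ l, u l * v l := by
  obtain ⟨m, rfl⟩ := Nat.exists_eq_add_of_le hN
  simp [Fin.sum_univ_add, padV]

lemma sum_padV_mul_eV {n N r : ℕ} (hr : n ≤ r) (u : Fin n → ZMod 2) :
    ∑ l : Fin N, padV n N u l * eV N r l = 0 :=
  Finset.sum_eq_zero fun l _ => by
    unfold padV eV
    split_ifs <;> first | omega | simp

lemma sum_padV_mul_padV_add_eV {n N r : ℕ} (hN : n ≤ N) (hr : n ≤ r)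
    (u v : Fin n → ZMod 2) :
    ∑ l : Fin N, padV n N u l * (padV n N v + eV N r) l = ∑ l, u l * v l := by
  simp only [Pi.add_apply, mul_add, Finset.sum_add_distrib, sum_padV_mul_padV hN,
    sum_padV_mul_eV hr, add_zero]

section Sympl

variable {N : ℕ} (z z' x x' : Fin N → ZMod 2)

lemma sympl_mk_zero_mk_zero : sympl N (z, 0) (z', 0) = 0 := by
  simp [sympl]

lemma sympl_zero_mk_zero_mk : sympl N (0, x) (0, x') = 0 := by
  simp [sympl]

lemma sympl_mk_zero_zero_mk : sympl N (z, 0) (0, x) = ∑ l, z l * x l := by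
  simp [sympl]

lemma sympl_zero_mk_mk_zero : sympl N (0, x) (z, 0) = ∑ l, x l * z l := by
  simp [sympl]

end Sympl

/-- The logical operators `Z̄ = Z^{g_{n-1}}` and `X̄ = X^{h_{n-1}}` of the
`[[2n-k-1, 1]]` code commute with every stabilizer generator and anticommute
with each other: their symplectic products with all generators vanish, while
`ω(z̄, x̄) = 1`. -/
theorem logicals_valid (n k : ℕ) (hn : 1 ≤ n) (hk : k ≤ n - 1)
    (g h : Fin n → Fin n → ZMod 2)
    (hdual : ∀ i j, (∑ l, h i l * g j l) = if i = j then 1 else 0) :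
    let zbar : (Fin (2 * n - k - 1) → ZMod 2) × (Fin (2 * n - k - 1) → ZMod 2) :=
      (padV n (2 * n - k - 1) (g ⟨n - 1, by omega⟩), 0)
    let xbar : (Fin (2 * n - k - 1) → ZMod 2) × (Fin (2 * n - k - 1) → ZMod 2) :=
      (0, padV n (2 * n - k - 1) (h ⟨n - 1, by omega⟩))
    (∀ a : Fin k ⊕ Fin (n - k - 1) ⊕ Fin (n - k - 1),
        sympl (2 * n - k - 1) zbar (gens n k hn hk g h a) = 0 ∧
        sympl (2 * n - k - 1) xbar (gens n k hn hk g h a) = 0) ∧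
      sympl (2 * n - k - 1) zbar xbar = 1 := by
  intro zbar xbar
  have hN : n ≤ 2 * n - k - 1 := by omega
  have hdual' : ∀ i j, ∑ l, g j l * h i l = if i = j then 1 else 0 := fun i j => by
    simpa only [mul_comm] using hdual i j
  refine ⟨?_, ?_⟩
  · rintro (i | j | j)
    · refine ⟨sympl_mk_zero_mk_zero _ _, ?_⟩
      simp only [gens, xbar, sympl_zero_mk_mk_zero, sum_padV_mul_padV hN, hdual, Fin.ext_iff]
      grind
    · refine ⟨sympl_mk_zero_mk_zero _ _, ?_⟩
      simp only [gens, xbar, sympl_zero_mk_mk_zero,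
        sum_padV_mul_padV_add_eV hN (Nat.le_add_right _ _), hdual, Fin.ext_iff]
      grind
    · refine ⟨?_, sympl_zero_mk_zero_mk _ _⟩
      simp only [gens, zbar, sympl_mk_zero_zero_mk,
        sum_padV_mul_padV_add_eV hN (Nat.le_add_right _ _), hdual', Fin.ext_iff]
      grind
  · simp only [zbar, xbar, sympl_mk_zero_zero_mk, sum_padV_mul_padV hN, hdual', if_pos]
end

section
/- Let N and m be natural numbers. On pairs (z, x) with z, x : Fin N → ZMod 2 define the symplectic product ω((z,x),(z',x')) = ∑_l z_l·x'_l + ∑_l x_l·z'_l ∈ ZMod 2, and similarly with N replaced by N+1. Let ι embed (Fin N → ZMod 2) × (Fin N → ZMod 2) into (Fin (N+1) → ZMod 2) × (Fin (N+1) → ZMod 2) by extending both components by zero in the new last coordinate, and let e : Fin (N+1) → ZMod 2 be the standard basis vector of the new last coordinate. Suppose s : Fin m → (Fin N → ZMod 2) × (Fin N → ZMod 2) is a linearly independent family with ω(s i, s j) = 0 for all i, j, and z̄, x̄ are vectors with ω(z̄, s j) = 0 and ω(x̄, s j) = 0 for all j and ω(z̄, x̄) = 1. Define s' j = ι(s j),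 s_new = ι(z̄) + (e, 0), z̄' = ι(z̄), and x̄' = ι(x̄) + (0, e). Then: (i) the family s'_0, …, s'_{m−1}, s_new is linearly independent and any two of these vectors have symplectic product 0; (ii) ω(z̄', s' j) = 0, ω(x̄', s' j) = 0 for all j, and ω(z̄', s_new) = 0, ω(x̄', s_new) = 0; and (iii) ω(z̄', x̄') = 1. -/
/-- Embed an `N`-qubit Pauli (in binary representation) into `N + 1` qubits by
extending both components by zero in the new last coordinate. -/
def emb (N : ℕ) (u : (Fin N → ZMod 2) × (Fin N → ZMod 2)) :
    (Fin (N + 1) → ZMod 2) × (Fin (N + 1) → ZMod 2) :=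
  (Fin.snoc u.1 0, Fin.snoc u.2 0)

/-- Standard basis vector of the new last coordinate. -/
def eLast (N : ℕ) : Fin (N + 1) → ZMod 2 := Pi.single (Fin.last N) 1

/-
A Pauli operator on `N + 1` qubits is a Pauli `u` on the first `N` qubits together with the bits
`(a, b)` of its last tensor factor, and the symplectic product splits as
`ω(u ⊗ (a, b), v ⊗ (c, d)) = ω(u, v) + (a d + b c)`. All new vectors are of this form:
`s' j = s j ⊗ (0, 0)`, `s_new = z̄ ⊗ (1, 0)`, `z̄' = z̄ ⊗ (0, 0)`, `x̄' = x̄ ⊗ (0, 1)`, so every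
required product reduces to one of the hypotheses, using that `ω` is symmetric and alternating.
Independence holds because `s_new` is the only generator with a `Z` on the new qubit, while
restricting to the old qubits recovers the independent family `s`.
-/

section

variable {N : ℕ}

lemma sympl_comm (u v : (Fin N → ZMod 2) × (Fin N → ZMod 2)) :
    sympl N u v = sympl N v u := by
  simp only [sympl, mul_comm (u.1 _), mul_comm (u.2 _)]
  exact add_comm _ _

lemma sympl_self (u : (Fin N → ZMod 2) × (Fin N → ZMod 2)) : sympl N u u = 0 := by
  simp only [sympl, mul_comm (u.2 _)]
  exact CharTwo.add_self_eq_zero _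

def snocPauli (u : (Fin N → ZMod 2) × (Fin N → ZMod 2)) (a b : ZMod 2) :
    (Fin (N + 1) → ZMod 2) × (Fin (N + 1) → ZMod 2) :=
  (Fin.snoc u.1 a, Fin.snoc u.2 b)

lemma emb_eq_snocPauli (u : (Fin N → ZMod 2) × (Fin N → ZMod 2)) :
    emb N u = snocPauli u 0 0 :=
  rfl

lemma emb_add_eLast_zero (u : (Fin N → ZMod 2) × (Fin N → ZMod 2)) :
    emb N u + (eLast N, 0) = snocPauli u 1 0 := by
  ext i <;> refine Fin.lastCases ?_ (fun i => ?_) i <;>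
    simp [emb, snocPauli, eLast, Fin.castSucc_ne_last]

lemma emb_add_zero_eLast (u : (Fin N → ZMod 2) × (Fin N → ZMod 2)) :
    emb N u + (0, eLast N) = snocPauli u 0 1 := by
  ext i <;> refine Fin.lastCases ?_ (fun i => ?_) i <;>
    simp [emb, snocPauli, eLast, Fin.castSucc_ne_last]

lemma sympl_snocPauli (u v : (Fin N → ZMod 2) × (Fin N → ZMod 2)) (a b c d : ZMod 2) :
    sympl (N + 1) (snocPauli u a b) (snocPauli v c d) = sympl N u v + (a * d + b * c) := by
  simp only [sympl, snocPauli, Fin.sum_univ_castSucc, Fin.snoc_castSucc, Fin.snoc_last]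
  ring

def restrictPauli (N : ℕ) : ((Fin (N + 1) → ZMod 2) × (Fin (N + 1) → ZMod 2)) →ₗ[ZMod 2]
    (Fin N → ZMod 2) × (Fin N → ZMod 2) :=
  (LinearMap.funLeft _ _ Fin.castSucc).prodMap (LinearMap.funLeft _ _ Fin.castSucc)

lemma restrictPauli_snocPauli (u : (Fin N → ZMod 2) × (Fin N → ZMod 2)) (a b : ZMod 2) :
    restrictPauli N (snocPauli u a b) = u := by
  ext i <;> simp [restrictPauli, snocPauli, LinearMap.funLeft_apply]

lemma linearIndependent_emb {m : ℕ} {s : Fin m → (Fin N → ZMod 2) × (Fin N → ZMod 2)}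
    (hs : LinearIndependent (ZMod 2) s) : LinearIndependent (ZMod 2) (fun j => emb N (s j)) :=
  .of_comp (restrictPauli N) <| by
    simpa only [Function.comp_def, emb_eq_snocPauli, restrictPauli_snocPauli] using hs

lemma snocPauli_one_notMem_span_emb {m : ℕ} (s : Fin m → (Fin N → ZMod 2) × (Fin N → ZMod 2))
    (u : (Fin N → ZMod 2) × (Fin N → ZMod 2)) (b : ZMod 2) :
    snocPauli u 1 b ∉ Submodule.span (ZMod 2) (Set.range fun j => emb N (s j)) := by
  let zLast : ((Fin (N + 1) → ZMod 2) × (Fin (N + 1) → ZMod 2)) →ₗ[ZMod 2] ZMod 2 :=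
    (LinearMap.proj (Fin.last N)).comp (LinearMap.fst _ _ _)
  have hspan : Submodule.span (ZMod 2) (Set.range fun j => emb N (s j)) ≤ LinearMap.ker zLast :=
    Submodule.span_le.mpr <| by rintro _ ⟨j, rfl⟩; simp [zLast, emb]
  intro hmem
  have h : zLast (snocPauli u 1 b) = 0 := hspan hmem
  simp [zLast, snocPauli] at h

end

/-- Appending an extra qubit, adding the stabilizer generator `Z̄ ⊗ Z` and
replacing the logical pair `(Z̄, X̄)` by `(Z̄ ⊗ I, X̄ ⊗ X)` again yields a valid
stabilizer code with one logical qubit: the enlarged generator family is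
linearly independent and mutually commuting, the new logical operators commute
with all generators, and they anticommute with each other. -/
theorem extended_code_valid (N m : ℕ)
    (s : Fin m → (Fin N → ZMod 2) × (Fin N → ZMod 2))
    (hli : LinearIndependent (ZMod 2) s)
    (hcomm : ∀ i j, sympl N (s i) (s j) = 0)
    (zbar xbar : (Fin N → ZMod 2) × (Fin N → ZMod 2))
    (hz : ∀ j, sympl N zbar (s j) = 0)
    (hx : ∀ j, sympl N xbar (s j) = 0)
    (hzx : sympl N zbar xbar = 1) :
    let snew := emb N zbar + (eLast N, 0)
    let fam : Fin (m + 1) → (Fin (N + 1) → ZMod 2) × (Fin (N + 1) → ZMod 2) :=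
      Fin.snoc (fun j => emb N (s j)) snew
    let zbar' := emb N zbar
    let xbar' := emb N xbar + (0, eLast N)
    (LinearIndependent (ZMod 2) fam ∧
        ∀ a b, sympl (N + 1) (fam a) (fam b) = 0) ∧
      ((∀ j, sympl (N + 1) zbar' (emb N (s j)) = 0 ∧
          sympl (N + 1) xbar' (emb N (s j)) = 0) ∧
        sympl (N + 1) zbar' snew = 0 ∧ sympl (N + 1) xbar' snew = 0) ∧
      sympl (N + 1) zbar' xbar' = 1 := by
  dsimp only
  rw [emb_add_eLast_zero, emb_add_zero_eLast]
  refine ⟨⟨?_, fun a b => ?_⟩, ⟨fun j => ⟨?_, ?_⟩, ?_, ?_⟩, ?_⟩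
  · exact linearIndependent_finSnoc.mpr
      ⟨linearIndependent_emb hli, snocPauli_one_notMem_span_emb s zbar 0⟩
  · refine Fin.lastCases ?_ (fun i => ?_) a <;> refine Fin.lastCases ?_ (fun j => ?_) b <;>
      simp [emb_eq_snocPauli, sympl_snocPauli, sympl_self, sympl_comm _ zbar, hz, hcomm]
  all_goals simp [emb_eq_snocPauli, sympl_snocPauli, sympl_self, sympl_comm xbar zbar, hz, hx, hzx,
    CharTwo.add_self_eq_zero]
end
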